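/- arXiv:1704.06297 — 2 statements merged into one kernel-verified Lean document; each statement's English description precedes it below -/
import Mathlib

section
/- Let T be a finite tree with vertex sets W_1 (degree 1), W_2 (degree 2), W_3 (degree ≥ 3). The number of connected components of the subgraph induced by W_2 is at most |W_1| + |W_3| − 1. -/
/-!
Root the tree at a leaf `r` and measure depth by the distance to `r`. A vertex has at most one
neighbour closer to `r`, so a vertex of degree at least 2 has a neighbour one level deeper. In a
component of the degree-2 vertices pick a deepest vertex `b`: its deeper neighbour `x` has degree
≠ 2, and `b`, being the unique shallower neighbour of `x`, recovers the component from `x`. Adding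
`r` itself, this injects the components plus one into the vertices of degree 1 or at least 3.
-/

open Finset

namespace SimpleGraph

variable {V : Type*} {G : SimpleGraph V}

theorem IsAcyclic.eq_of_adj_of_dist_add_one_eq (hG : G.IsAcyclic) (r : V) {x b₁ b₂ : V}
    (h₁ : G.Adj b₁ x) (h₂ : G.Adj b₂ x) (hd₁ : G.dist r b₁ + 1 = G.dist r x)
    (hd₂ : G.dist r b₂ + 1 = G.dist r x) : b₁ = b₂ := by
  have hrx : G.Reachable r x := Reachable.of_dist_ne_zero (by omega)
  have shortest_path_via {b : V} (h : G.Adj b x) (hd : G.dist r b + 1 = G.dist r x) :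
      ∃ q : G.Path r x, q.1.penultimate = b := by
    obtain ⟨p, -, hp⟩ := (hrx.trans h.symm.reachable).exists_path_of_dist
    exact ⟨⟨p.concat h, (p.concat h).isPath_of_length_eq_dist (by simp [hp, hd])⟩,
      p.penultimate_concat h⟩
  obtain ⟨q₁, rfl⟩ := shortest_path_via h₁ hd₁
  obtain ⟨q₂, rfl⟩ := shortest_path_via h₂ hd₂
  rw [(hG.subsingleton_path r x).elim q₁ q₂]

theorem IsTree.exists_adj_dist_eq_add_one (hG : G.IsTree) (r : V) {b : V}
    [Fintype (G.neighborSet b)] (hb : 2 ≤ G.degree b) :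
    ∃ x, G.Adj b x ∧ G.dist r x = G.dist r b + 1 := by
  by_contra! hcloser
  have hparent : ∀ x ∈ G.neighborFinset b, G.dist r x + 1 = G.dist r b := fun x hx => by
    have hadj := (G.mem_neighborFinset b x).mp hx
    have := hG.dist_eq_dist_add_one_of_adj r hadj
    have := hcloser x hadj
    omega
  have : (G.neighborFinset b).card ≤ 1 := Finset.card_le_one.mpr fun x hx y hy =>
    hG.isAcyclic.eq_of_adj_of_dist_add_one_eq r ((G.mem_neighborFinset b x).mp hx).symm
      ((G.mem_neighborFinset b y).mp hy).symm (hparent x hx) (hparent y hy)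
  rw [card_neighborFinset_eq_degree] at this
  omega

theorem IsTree.exists_adj_notMem_of_connectedComponent_induce [Fintype V] [DecidableRel G.Adj]
    (hG : G.IsTree) (r : V) {S : Set V} (hS : ∀ v ∈ S, 2 ≤ G.degree v)
    (K : (G.induce S).ConnectedComponent) :
    ∃ b : S, (G.induce S).connectedComponentMk b = K ∧
      ∃ x ∉ S, G.Adj b x ∧ G.dist r x = G.dist r b + 1 := by
  obtain ⟨b, hbK, hbmax⟩ :=
    K.supp.exists_max_image (fun v : S => G.dist r v) K.supp.toFinite K.nonempty_supp
  obtain ⟨x, hbx, hdx⟩ := hG.exists_adj_dist_eq_add_one r (hS b b.2)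
  refine ⟨b, hbK, x, fun hxS => ?_, hbx, hdx⟩
  have hxK : (⟨x, hxS⟩ : S) ∈ K.supp :=
    (ConnectedComponent.mem_supp_congr_adj K (show (G.induce S).Adj b ⟨x, hxS⟩ from hbx)).mp hbK
  have : G.dist r x ≤ G.dist r b := hbmax _ hxK
  omega

theorem IsTree.card_connectedComponent_induce_add_one_le [Fintype V] [DecidableRel G.Adj]
    (hG : G.IsTree) {S : Set V} (hS : ∀ v ∈ S, 2 ≤ G.degree v) {r : V} (hr : r ∉ S) :
    Nat.card (G.induce S).ConnectedComponent + 1 ≤ Sᶜ.ncard := by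
  choose b hbK x hxS hbx hdx using hG.exists_adj_notMem_of_connectedComponent_induce r hS
  let f : Option (G.induce S).ConnectedComponent → (Sᶜ : Set V) :=
    fun K => K.elim ⟨r, hr⟩ fun K => ⟨x K, hxS K⟩
  have hf : Function.Injective f := by
    rintro (_ | K₁) (_ | K₂) h <;> simp only [f, Option.elim, Subtype.mk.injEq] at h
    · rfl
    · have := hdx K₂; rw [← h, dist_self] at this; omega
    · have := hdx K₁; rw [h, dist_self] at this; omega
    · rw [← hbK K₁, ← hbK K₂, Subtype.ext <| hG.isAcyclic.eq_of_adj_of_dist_add_one_eq r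
        (hbx K₁) (h ▸ hbx K₂) (hdx K₁).symm (h ▸ hdx K₂).symm]
  simpa [Finite.card_option, Nat.card_coe_set_eq] using Nat.card_le_card_of_injective f hf

theorem Preconnected.ncard_compl_setOf_degree_eq_two [Fintype V] [Nontrivial V]
    [DecidableRel G.Adj] (hG : G.Preconnected) :
    {v | G.degree v = 2}ᶜ.ncard = #{v | G.degree v = 1} + #{v | 3 ≤ G.degree v} := by
  classical
  rw [← card_union_of_disjoint (disjoint_filter.mpr fun _ _ h₁ h₃ => by omega), ← filter_or,
    ← Set.ncard_coe_finset]
  congr 1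
  ext v
  have := hG.degree_pos_of_nontrivial v
  simp only [Set.mem_compl_iff, Set.mem_ofPred_eq, coe_filter, mem_univ, true_and]
  omega

end SimpleGraph

open SimpleGraph

/-- In a finite tree, the number of connected components of the subgraph induced
by the degree-2 vertices is at most `|W₁| + |W₃| − 1`, where `W₁` and `W₃` are the
sets of vertices of degree 1 and of degree at least 3, respectively. -/
theorem stmt6 {V : Type*} [Fintype V] (G : SimpleGraph V) [DecidableRel G.Adj]
    (hT : G.IsTree) :
    Nat.card ((G.induce {v : V | G.degree v = 2}).ConnectedComponent) ≤
      (Finset.univ.filter fun v => G.degree v = 1).card +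
        (Finset.univ.filter fun v => 3 ≤ G.degree v).card - 1 := by
  rcases Nat.eq_zero_or_pos (Nat.card (G.induce {v | G.degree v = 2}).ConnectedComponent)
    with h0 | hpos
  · omega
  obtain ⟨K⟩ := (Nat.card_pos_iff.mp hpos).1
  obtain ⟨⟨v, hv : G.degree v = 2⟩, -⟩ := K.exists_rep
  obtain ⟨w, hvw⟩ := (G.degree_pos_iff_exists_adj v).mp (by omega)
  have : Nontrivial V := ⟨v, w, hvw.ne⟩
  obtain ⟨r, hr⟩ := hT.exists_vert_degree_one_of_nontrivial
  have hcount := hT.card_connectedComponent_induce_add_one_le (fun _ hv => hv.ge)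
    (show r ∉ {v | G.degree v = 2} by simp [hr])
  rw [hT.connected.preconnected.ncard_compl_setOf_degree_eq_two] at hcount
  omega
end

section
/- With the setup of a finite automaton (finite state set Q, alphabet Σ, transition δ, start state q_0) and a word s of length k with ℓ ≤ |Q| ≤ k: for any target length w ≥ k there exists a word s' of length k' with w ≤ k' ≤ w + |Q|, such that (i) δ run on s' from q_0 ends in the same state as on s, and (ii) the set of letters occurring in s' equals the set of letters occurring in s. -/
/-!
Among the `|Q| + 1` states reached after the prefixes of `s` of length at most `|Q|`, two
coincide, so `s = x ++ y ++ z` with `y` nonempty, `|y| ≤ |Q|`, and `y` looping at the state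
reached after `x`. Repeating `y` keeps the final state, and as long as `y` still occurs the
set of letters is unchanged; choosing the number of copies by division with remainder by `|y|`
lands the length in `(w, w + |y|]`.
-/

theorem List.foldl_flatten_replicate_of_foldl_eq {α β : Type*} {f : β → α → β} {b : β}
    {l : List α} (h : l.foldl f b = b) (n : ℕ) : (replicate n l).flatten.foldl f b = b := by
  induction n with
  | zero => rfl
  | succ n ih => rw [replicate_succ, flatten_cons, foldl_append, h, ih]

theorem List.mem_flatten_replicate {α : Type*} {n : ℕ} (hn : n ≠ 0) {a : α} {l : List α} :
    a ∈ (replicate n l).flatten ↔ a ∈ l := by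
  simp [hn]

theorem List.exists_pumpable_of_card_le_length {Q A : Type*} [Fintype Q] (δ : Q → A → Q)
    (q₀ : Q) {s : List A} (hs : Fintype.card Q ≤ s.length) :
    ∃ x y z, s = x ++ y ++ z ∧ y ≠ [] ∧ y.length ≤ Fintype.card Q ∧
      ∀ n, (x ++ (replicate n y).flatten ++ z).foldl δ q₀ = s.foldl δ q₀ := by
  obtain ⟨q, x, y, z, rfl, hlen, hy, hx, hloop, -⟩ :=
    (⟨δ, q₀, ∅⟩ : DFA A Q).evalFrom_split (s := q₀) hs rfl
  refine ⟨x, y, z, rfl, hy, by omega, fun n => ?_⟩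
  simp only [DFA.evalFrom] at hx hloop
  simp only [foldl_append, hx, hloop, foldl_flatten_replicate_of_foldl_eq hloop]

theorem stmt10_general {Q A : Type*} [Fintype Q] [DecidableEq A]
    (δ : Q → A → Q) (q₀ : Q) (s : List A)
    (hk : Fintype.card Q ≤ s.length) (w : ℕ) (hw : s.length ≤ w) :
    ∃ s' : List A, w ≤ s'.length ∧ s'.length ≤ w + Fintype.card Q ∧
      List.foldl δ q₀ s' = List.foldl δ q₀ s ∧ s'.toFinset = s.toFinset := by
  obtain ⟨x, y, z, rfl, hy, hyQ, hpump⟩ := List.exists_pumpable_of_card_le_length δ q₀ hk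
  set m := y.length
  have hm : 0 < m := List.length_pos_iff.mpr hy
  set d := w - (x ++ y ++ z).length
  have hlow : d < d / m * m + m := Nat.lt_div_mul_add hm
  have hhigh : d / m * m ≤ d := Nat.div_mul_le_self d m
  have hlen : (x ++ (List.replicate (d / m + 2) y).flatten ++ z).length
      = (x ++ y ++ z).length + (d / m * m + m) := by
    simp only [List.length_append, List.length_flatten, List.map_replicate, List.sum_replicate,
      smul_eq_mul]
    ring
  refine ⟨x ++ (List.replicate (d / m + 2) y).flatten ++ z,
    by omega, by omega, hpump _, ?_⟩
  ext a
  simp only [List.toFinset_append, Finset.mem_union, List.mem_toFinset,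
    List.mem_flatten_replicate (Nat.succ_ne_zero _)]

/-- Specification of the `Pump` operation: for a word `s` of length `k` with
`ℓ ≤ |Q| ≤ k` and any target length `w ≥ k`, there is a word `s'` of length
`k' ∈ [w, w + |Q|]` driving the automaton to the same final state as `s`, and
whose set of letters equals that of `s`. -/
theorem stmt10 {Q A : Type*} [Fintype Q] [DecidableEq A] (ℓ : ℕ)
    (hℓ : ℓ ≤ Fintype.card Q) (δ : Q → A → Q) (q₀ : Q) (s : List A)
    (hk : Fintype.card Q ≤ s.length) (w : ℕ) (hw : s.length ≤ w) :
    ∃ s' : List A, w ≤ s'.length ∧ s'.length ≤ w + Fintype.card Q ∧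
      List.foldl δ q₀ s' = List.foldl δ q₀ s ∧ s'.toFinset = s.toFinset :=
  stmt10_general δ q₀ s hk w hw
end
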